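/- arXiv:2002.07570 — 6 statements merged into one kernel-verified Lean document; each statement's English description precedes it below -/
import Mathlib

section
/- Let ν be a σ-finite measure on a measurable space (X, M) and let N ⊂ M be a family of measurable sets. Then ν can be decomposed uniquely as ν = ν_N + ν_N^⊥ where ν_N is carried by N (i.e., there exist countably many sets N_i ∈ N with ν_N(X \ ⋃ N_i) = 0) and ν_N^⊥ is singular to N (i.e., ν_N^⊥(N) = 0 for every N ∈ N). -/
/-!
Choose a countable subfamily `D ⊆ N` whose union `U` contains every member of `N` up to a
`ν`-null set (a "measurable union" of `N`; this is where σ-finiteness enters). Then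
`ν = ν|U + ν|Uᶜ` is the required decomposition. Conversely, a decomposition `μ₁ + μ₂` with `μ₁`
carried by `⋃₀ T` splits `ν` along `U ∪ ⋃₀ T`, which is `ν`-a.e. equal to `U`, so `μ₁ = ν|U` and
`μ₂ = ν|Uᶜ`.
-/

open MeasureTheory Set

namespace MeasureTheory.Measure

variable {X : Type*} [MeasurableSpace X]

lemma sUnion_ae_le_of_countable {μ : Measure X} {T : Set (Set X)} {U : Set X}
    (hT : T.Countable) (h : ∀ t ∈ T, t ≤ᵐ[μ] U) : ⋃₀ T ≤ᵐ[μ] U := by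
  simp_rw [ae_le_set, sUnion_eq_biUnion, iUnion_sdiff]
  rw [measure_biUnion_null_iff hT]
  exact fun t ht => ae_le_set.1 (h t ht)

lemma restrict_eq_of_eq_add {ν μ₁ μ₂ : Measure X} {W : Set X} (hν : ν = μ₁ + μ₂)
    (h₁ : μ₁ Wᶜ = 0) (h₂ : μ₂ W = 0) : ν.restrict W = μ₁ := by
  rw [hν, restrict_add, restrict_eq_self_of_ae_mem (mem_ae_iff.2 h₁),
    restrict_eq_zero.2 h₂, add_zero]

lemma restrict_compl_eq_of_eq_add {ν μ₁ μ₂ : Measure X} {W : Set X} (hν : ν = μ₁ + μ₂)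
    (h₁ : μ₁ Wᶜ = 0) (h₂ : μ₂ W = 0) : ν.restrict Wᶜ = μ₂ :=
  restrict_eq_of_eq_add (hν.trans (add_comm _ _)) (by rwa [compl_compl]) h₁

end MeasureTheory.Measure

open Measure in
/-- Decomposition of a σ-finite measure into a part carried by a family `N` of measurable
sets and a part singular to `N`, and uniqueness of this decomposition. -/
theorem statement0 {X : Type*} [MeasurableSpace X] (ν : Measure X) [SigmaFinite ν]
    (N : Set (Set X)) (hN : ∀ s ∈ N, MeasurableSet s) :
    ∃! p : Measure X × Measure X,
      ν = p.1 + p.2 ∧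
      (∃ S : Set (Set X), S.Countable ∧ S ⊆ N ∧ p.1 (univ \ ⋃₀ S) = 0) ∧
      (∀ s ∈ N, p.2 s = 0) := by
  obtain ⟨D, hDN, hDc, hD⟩ := exists_ae_subset_biUnion_countable ν hN
  set U := ⋃₀ D
  have hU : MeasurableSet U := .sUnion hDc fun s hs => hN s (hDN hs)
  have hcarried : ν.restrict U (univ \ U) = 0 := by
    rw [← compl_eq_univ_sdiff, restrict_apply hU.compl, compl_inter_self, measure_empty]
  have hsingular : ∀ s ∈ N, ν.restrict Uᶜ s = 0 := fun s hs => by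
    rw [restrict_apply (hN s hs), ← sdiff_eq]
    exact ae_le_set.1 (hD s hs)
  refine ⟨(ν.restrict U, ν.restrict Uᶜ), ⟨(restrict_add_restrict_compl hU).symm,
    ⟨D, hDc, hDN, hcarried⟩, hsingular⟩, ?_⟩
  rintro ⟨μ₁, μ₂⟩ ⟨hν, ⟨T, hTc, hTN, hT⟩, hsing⟩
  have hWU : (U ∪ ⋃₀ T : Set X) =ᵐ[ν] U :=
    union_ae_eq_left_iff_ae_subset.2 (sUnion_ae_le_of_countable hTc fun t ht => hD t (hTN ht))
  have h₁ : μ₁ (U ∪ ⋃₀ T)ᶜ = 0 := by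
    rw [compl_eq_univ_sdiff]
    exact measure_mono_null (sdiff_subset_sdiff_right subset_union_right) hT
  have h₂ : μ₂ (U ∪ ⋃₀ T) = 0 := by
    rw [← sUnion_union, measure_sUnion_null_iff (hDc.union hTc)]
    exact fun s hs => hsing s (union_subset hDN hTN hs)
  ext1
  · rw [← restrict_eq_of_eq_add hν h₁ h₂, restrict_congr_set hWU]
  · rw [← restrict_compl_eq_of_eq_add hν h₁ h₂, restrict_congr_set hWU.compl]
end

section
/- Let ν be a measure and let E₀ ⊃ E₁ ⊃ E₂ ⊃ ⋯ be a decreasing sequence of measurable sets with E = ⋂_k E_k and ν(E₀) < ∞. Let ω : E₀ → [0, ∞) be measurable with ω = 0 on E, let c_k ≥ 0, and suppose that for every j, ∑_{k=0}^{j} c_k · sup_{x ∈ E_j} ω(x) ≤ C < ∞. Then ∑_{k=0}^{∞} c_k ∫_{E_k} ω dν ≤ C · ν(E₀ \ E). -/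
open MeasureTheory Set ENNReal

/-!
Integrate the pointwise weight `F x = ∑ₖ c_k 𝟙_{E_k}(x) ω(x)`. A point of `E₀ \ E` lies in exactly
one annulus `E_j \ E_{j+1}`, hence in `E_k` precisely for `k ≤ j`, so there
`F x = (∑_{k ≤ j} c_k) ω(x) ≤ (∑_{k ≤ j} c_k) sup_{E_j} ω ≤ C`; elsewhere `F` vanishes, either
because `x ∉ E₀` or because `ω x = 0` on `E`. Hence `∫ F ≤ C ν(E₀ \ E)`.
-/

/-- Unlike `lintegral_tsum`, this inequality needs no measurability. -/
theorem MeasureTheory.tsum_lintegral_le_lintegral_tsum {α ι : Type*} [MeasurableSpace α]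
    {μ : Measure α} (f : ι → α → ℝ≥0∞) :
    ∑' i, ∫⁻ a, f i a ∂μ ≤ ∫⁻ a, ∑' i, f i a ∂μ := by
  rw [ENNReal.tsum_eq_iSup_sum]
  refine iSup_le fun s => ?_
  have sum_le : ∑ i ∈ s, ∫⁻ a, f i a ∂μ ≤ ∫⁻ a, ∑ i ∈ s, f i a ∂μ := by
    classical
    induction s using Finset.induction_on with
    | empty => simp
    | insert i s hi ih =>
      simp only [Finset.sum_insert hi]
      exact (add_le_add le_rfl ih).trans (le_lintegral_add _ _)
  exact sum_le.trans (lintegral_mono fun a => ENNReal.sum_le_tsum s)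

section Antitone

variable {α : Type*} {E : ℕ → Set α} {x : α}

theorem Set.exists_mem_notMem_succ_of_notMem_iInter (h0 : x ∈ E 0) (hx : x ∉ ⋂ k, E k) :
    ∃ j, x ∈ E j ∧ x ∉ E (j + 1) := by
  by_contra! hstep
  exact hx (mem_iInter.2 fun k => Nat.rec h0 hstep k)

theorem Antitone.mem_iff_le_of_mem_of_notMem_succ (hE : Antitone E) {j : ℕ}
    (hj : x ∈ E j) (hj' : x ∉ E (j + 1)) (k : ℕ) : x ∈ E k ↔ k ≤ j :=
  ⟨fun hk => not_lt.1 fun hjk => hj' (hE hjk hk), fun hkj => hE hkj hj⟩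

theorem Antitone.tsum_mul_indicator_of_mem_of_notMem_succ (hE : Antitone E)
    (c : ℕ → ℝ≥0∞) (ω : α → ℝ≥0∞) {j : ℕ} (hj : x ∈ E j) (hj' : x ∉ E (j + 1)) :
    ∑' k, c k * (E k).indicator ω x = (∑ k ∈ Finset.range (j + 1), c k) * ω x := by
  have hmem := hE.mem_iff_le_of_mem_of_notMem_succ hj hj'
  rw [tsum_eq_sum (s := Finset.range (j + 1)), Finset.sum_mul]
  · refine Finset.sum_congr rfl fun k hk => ?_
    rw [indicator_of_mem ((hmem k).2 (Finset.mem_range_succ_iff.1 hk))]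
  · intro k hk
    rw [indicator_of_notMem fun hxk => hk (Finset.mem_range_succ_iff.2 ((hmem k).1 hxk)), mul_zero]

theorem Antitone.tsum_mul_indicator_le_indicator_diff_iInter (hE : Antitone E)
    {ω : α → ℝ≥0∞} (hω0 : ∀ x ∈ ⋂ k, E k, ω x = 0) {c : ℕ → ℝ≥0∞} {C : ℝ≥0∞}
    (hbound : ∀ j, (∑ k ∈ Finset.range (j + 1), c k) * (⨆ x ∈ E j, ω x) ≤ C) (x : α) :
    ∑' k, c k * (E k).indicator ω x ≤ (E 0 \ ⋂ k, E k).indicator (fun _ => C) x := by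
  by_cases hx : x ∈ E 0 \ ⋂ k, E k
  · obtain ⟨j, hj, hj'⟩ := Set.exists_mem_notMem_succ_of_notMem_iInter hx.1 hx.2
    rw [hE.tsum_mul_indicator_of_mem_of_notMem_succ c ω hj hj', indicator_of_mem hx]
    exact (mul_le_mul_right (le_biSup ω hj) _).trans (hbound j)
  · suffices hzero : ∀ k, x ∈ E k → ω x = 0 by
      rw [indicator_of_notMem hx, nonpos_iff_eq_zero, ENNReal.tsum_eq_zero]
      exact fun k => by rw [indicator_apply_eq_zero.2 (hzero k), mul_zero]
    intro k hk
    exact hω0 x (not_not.1 fun hxE => hx ⟨hE (Nat.zero_le k) hk, hxE⟩)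

end Antitone

theorem statement2_general {X : Type*} [MeasurableSpace X] (ν : Measure X)
    (E : ℕ → Set X) (hmeas : ∀ k, MeasurableSet (E k)) (hanti : ∀ k, E (k + 1) ⊆ E k)
    (ω : X → ℝ≥0∞) (hω0 : ∀ x ∈ ⋂ k, E k, ω x = 0)
    (c : ℕ → ℝ≥0∞) (C : ℝ≥0∞)
    (hbound : ∀ j, (∑ k ∈ Finset.range (j + 1), c k) * (⨆ x ∈ E j, ω x) ≤ C) :
    ∑' k, c k * ∫⁻ x in E k, ω x ∂ν ≤ C * ν (E 0 \ ⋂ k, E k) := by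
  have hE : Antitone E := antitone_nat_of_succ_le hanti
  calc ∑' k, c k * ∫⁻ x in E k, ω x ∂ν
      = ∑' k, c k * ∫⁻ x, (E k).indicator ω x ∂ν := by
        simp_rw [lintegral_indicator (hmeas _)]
    _ ≤ ∑' k, ∫⁻ x, c k * (E k).indicator ω x ∂ν :=
        ENNReal.tsum_le_tsum fun k => lintegral_const_mul_le _ _
    _ ≤ ∫⁻ x, ∑' k, c k * (E k).indicator ω x ∂ν := tsum_lintegral_le_lintegral_tsum _
    _ ≤ ∫⁻ x, (E 0 \ ⋂ k, E k).indicator (fun _ => C) x ∂ν :=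
        lintegral_mono (hE.tsum_mul_indicator_le_indicator_diff_iInter hω0 hbound)
    _ ≤ C * ν (E 0 \ ⋂ k, E k) := lintegral_indicator_const_le _ _

/-- Weighted sums over a decreasing sequence of sets: if `ω` vanishes on `E = ⋂ E_k` and the
partial sums `∑_{k ≤ j} c_k · sup_{E_j} ω` are uniformly bounded by `C`, then
`∑_k c_k ∫_{E_k} ω dν ≤ C · ν(E₀ \ E)`. -/
theorem statement2 {X : Type*} [MeasurableSpace X] (ν : Measure X)
    (E : ℕ → Set X) (hmeas : ∀ k, MeasurableSet (E k)) (hanti : ∀ k, E (k + 1) ⊆ E k)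
    (hfin : ν (E 0) < ⊤)
    (ω : X → ℝ≥0∞) (hω : Measurable ω) (hω0 : ∀ x ∈ ⋂ k, E k, ω x = 0)
    (c : ℕ → ℝ≥0∞) (C : ℝ≥0∞) (hC : C ≠ ⊤)
    (hbound : ∀ j, (∑ k ∈ Finset.range (j + 1), c k) * (⨆ x ∈ E j, ω x) ≤ C) :
    ∑' k, c k * ∫⁻ x in E k, ω x ∂ν ≤ C * ν (E 0 \ ⋂ k, E k) :=
  statement2_general ν E hmeas hanti ω hω0 c C hbound
end

section
/- Let H be a Hilbert space, E ⊂ ℝ, and let f : E → H be an L-Lipschitz map. Then the 1-dimensional packing premeasure satisfies P¹(f(E)) ≤ L · P¹(E), and the 1-dimensional packing measure satisfies 𝒫¹(f(E)) ≤ L · 𝒫¹(E). -/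
open Metric Set ENNReal NNReal

/-- The `δ`-packing premeasure `P¹_δ(S)`: supremum of `∑ 2rᵢ` over finite collections of
disjoint closed balls centered in `S` with `2rᵢ ≤ δ`. -/
noncomputable def packingPre {X : Type*} [PseudoMetricSpace X] (δ : ℝ) (S : Set X) : ℝ≥0∞ :=
  ⨆ (n : ℕ) (c : Fin n → X × ℝ)
    (_ : (∀ i, (c i).1 ∈ S ∧ 0 < (c i).2 ∧ 2 * (c i).2 ≤ δ) ∧
      ∀ i j, i ≠ j →
        Disjoint (closedBall (c i).1 (c i).2) (closedBall (c j).1 (c j).2)),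
    ∑ i, ENNReal.ofReal (2 * (c i).2)

/-- The 1-dimensional packing premeasure `P¹(S) = lim_{δ↓0} P¹_δ(S)`. -/
noncomputable def packingPremeasure {X : Type*} [PseudoMetricSpace X] (S : Set X) : ℝ≥0∞ :=
  ⨅ (δ : ℝ) (_ : 0 < δ), packingPre δ S

/-- The 1-dimensional packing measure `𝒫¹(S) = inf { ∑ P¹(Sₗ) : S ⊆ ⋃ Sₗ }`. -/
noncomputable def packingMeasure {X : Type*} [PseudoMetricSpace X] (S : Set X) : ℝ≥0∞ :=
  ⨅ (t : ℕ → Set X) (_ : S ⊆ ⋃ i, t i), ∑' i, packingPremeasure (t i)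

/-!
Let `B(f xᵢ, rᵢ)` be disjoint closed balls in the normed space `H`. There, disjointness of closed
balls means that the centers are farther apart than the sum of the radii, so
`rᵢ + rⱼ < ‖f xᵢ - f xⱼ‖ ≤ L |xᵢ - xⱼ|`, and the balls `B(xᵢ, rᵢ / L)` are disjoint. Thus every
`δ`-packing of `f(E)` comes from a `δ / L`-packing of `E` whose total size is smaller by the
factor `L`, which gives the bound on `P¹`. The bound on `𝒫¹` follows by applying it to the pieces
`f(Sₗ ∩ E)` of a cover of `f(E)`. For `L = 0` the image has diameter zero and carries packings of
at most one ball.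
-/

section

variable {X Y : Type*} [PseudoMetricSpace X] [PseudoMetricSpace Y]

def IsPacking (δ : ℝ) (S : Set X) {n : ℕ} (c : Fin n → X × ℝ) : Prop :=
  (∀ i, (c i).1 ∈ S ∧ 0 < (c i).2 ∧ 2 * (c i).2 ≤ δ) ∧
    ∀ i j, i ≠ j → Disjoint (closedBall (c i).1 (c i).2) (closedBall (c j).1 (c j).2)

section Packing

variable {δ : ℝ} {S T : Set X} {n : ℕ} {c : Fin n → X × ℝ}

lemma IsPacking.mono (hc : IsPacking δ S c) (hST : S ⊆ T) : IsPacking δ T c :=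
  ⟨fun i => ⟨hST (hc.1 i).1, (hc.1 i).2⟩, hc.2⟩

lemma sum_le_packingPre (hc : IsPacking δ S c) :
    ∑ i, ENNReal.ofReal (2 * (c i).2) ≤ packingPre δ S :=
  le_iSup₂_of_le n c (le_iSup_of_le hc le_rfl)

lemma packingPre_le {a : ℝ≥0∞}
    (h : ∀ n (c : Fin n → X × ℝ), IsPacking δ S c → ∑ i, ENNReal.ofReal (2 * (c i).2) ≤ a) :
    packingPre δ S ≤ a :=
  iSup₂_le fun n c => iSup_le (h n c)

lemma packingPre_mono (hST : S ⊆ T) : packingPre δ S ≤ packingPre δ T :=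
  packingPre_le fun _ _ hc => sum_le_packingPre (hc.mono hST)

lemma packingPremeasure_mono (hST : S ⊆ T) : packingPremeasure S ≤ packingPremeasure T :=
  iInf₂_mono fun _ _ => packingPre_mono hST

lemma packingPremeasure_le_packingPre (hδ : 0 < δ) : packingPremeasure S ≤ packingPre δ S :=
  iInf₂_le δ hδ

lemma packingMeasure_le_tsum {t : ℕ → Set X} (ht : S ⊆ ⋃ i, t i) :
    packingMeasure S ≤ ∑' i, packingPremeasure (t i) :=
  iInf₂_le t ht

lemma packingPre_le_ofReal_of_ediam_eq_zero (hS : ediam S = 0) (δ : ℝ) :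
    packingPre δ S ≤ ENNReal.ofReal δ := by
  refine packingPre_le fun n c hc => ?_
  have hcenter : ∀ i j, (c i).1 ∈ closedBall (c j).1 (c j).2 := fun i j => by
    have : edist (c i).1 (c j).1 = 0 :=
      nonpos_iff_eq_zero.1 (hS ▸ edist_le_ediam_of_mem (hc.1 i).1 (hc.1 j).1)
    rw [mem_closedBall, dist_edist, this, ENNReal.toReal_zero]
    exact (hc.1 j).2.1.le
  rcases isEmpty_or_nonempty (Fin n) with _ | ⟨⟨i⟩⟩
  · simp
  have hsingle : ∀ j, j = i := fun j => by
    by_contra hji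
    exact disjoint_left.1 (hc.2 j i hji) (hcenter j j) (hcenter j i)
  rw [Finset.sum_eq_single_of_mem i (Finset.mem_univ i) fun j _ hj => absurd (hsingle j) hj]
  exact ENNReal.ofReal_le_ofReal (hc.1 i).2.2

lemma packingPremeasure_eq_zero_of_ediam_eq_zero (hS : ediam S = 0) :
    packingPremeasure S = 0 := by
  refine nonpos_iff_eq_zero.1 (ENNReal.le_of_forall_pos_le_add fun ε hε _ => ?_)
  calc packingPremeasure S ≤ packingPre ε S := packingPremeasure_le_packingPre (by positivity)
    _ ≤ ENNReal.ofReal ε := packingPre_le_ofReal_of_ediam_eq_zero hS _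
    _ = 0 + ε := by rw [ENNReal.ofReal_coe_nnreal, zero_add]

end Packing

section Lipschitz

variable {H : Type*} [SeminormedAddCommGroup H] [NormedSpace ℝ H] {f : X → H} {E : Set X}
  {L : ℝ≥0}

lemma LipschitzOnWith.packingPre_image_le (hf : LipschitzOnWith L f E) (hL : 0 < L) (δ : ℝ) :
    packingPre δ (f '' E) ≤ L * packingPre (δ / L) E := by
  have hL' : (0 : ℝ) < L := hL
  refine packingPre_le fun n c hc => ?_
  choose x hxE hfx using fun i => (hc.1 i).1
  set c' : Fin n → X × ℝ := fun i => (x i, (c i).2 / L)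
  have hc' : IsPacking (δ / L) E c' := by
    refine ⟨fun i => ⟨hxE i, div_pos (hc.1 i).2.1 hL', ?_⟩, fun i j hij => ?_⟩
    · rw [mul_div_assoc']
      exact div_le_div_of_nonneg_right (hc.1 i).2.2 hL'.le
    · apply closedBall_disjoint_closedBall
      have hfar := (disjoint_closedBall_closedBall_iff (hc.1 i).2.1.le (hc.1 j).2.1.le).1
        (hc.2 i j hij)
      have hlip : dist (c i).1 (c j).1 ≤ L * dist (x i) (x j) := by
        rw [← hfx i, ← hfx j]
        exact hf.dist_le_mul _ (hxE i) _ (hxE j)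
      rw [← add_div, div_lt_iff₀ hL', mul_comm]
      exact hfar.trans_le hlip
  calc ∑ i, ENNReal.ofReal (2 * (c i).2) = L * ∑ i, ENNReal.ofReal (2 * (c' i).2) := by
        rw [Finset.mul_sum]
        refine Finset.sum_congr rfl fun i _ => ?_
        rw [← ENNReal.ofReal_coe_nnreal, ← ENNReal.ofReal_mul hL'.le]
        simp only [c']
        field_simp
    _ ≤ L * packingPre (δ / L) E := by gcongr; exact sum_le_packingPre hc'

lemma LipschitzOnWith.packingPremeasure_image_le (hf : LipschitzOnWith L f E) :
    packingPremeasure (f '' E) ≤ L * packingPremeasure E := by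
  rcases eq_zero_or_pos L with rfl | hL
  · have hdiam : ediam (f '' E) = 0 :=
      nonpos_iff_eq_zero.1 <| ediam_image_le_iff.2 fun a ha b hb => by
        simpa using hf ha hb
    simp [packingPremeasure_eq_zero_of_ediam_eq_zero hdiam]
  have hL0 : (L : ℝ≥0∞) ≠ 0 := by exact_mod_cast hL.ne'
  simp_rw [packingPremeasure, ENNReal.mul_iInf_of_ne hL0 ENNReal.coe_ne_top]
  refine le_iInf₂ fun δ hδ => ?_
  calc _ ≤ packingPre (L * δ) (f '' E) :=
        packingPremeasure_le_packingPre (by positivity)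
    _ ≤ L * packingPre (L * δ / L) E := hf.packingPre_image_le hL _
    _ = L * packingPre δ E := by rw [mul_div_cancel_left₀ _ (NNReal.coe_ne_zero.2 hL.ne')]

end Lipschitz

lemma packingMeasure_image_le {f : X → Y} {E : Set X} {C : ℝ≥0}
    (h : ∀ A ⊆ E, packingPremeasure (f '' A) ≤ C * packingPremeasure A) :
    packingMeasure (f '' E) ≤ C * packingMeasure E := by
  rcases eq_or_ne C 0 with rfl | hC
  · have hzero : packingPremeasure (f '' E) = 0 := by simpa using h E subset_rfl
    calc packingMeasure (f '' E) ≤ ∑' _ : ℕ, packingPremeasure (f '' E) :=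
          packingMeasure_le_tsum (subset_iUnion (fun _ => f '' E) 0)
      _ = (0 : ℝ≥0) * packingMeasure E := by simp [hzero]
  have hC0 : (C : ℝ≥0∞) ≠ 0 := by exact_mod_cast hC
  simp_rw [packingMeasure, ENNReal.mul_iInf_of_ne hC0 ENNReal.coe_ne_top]
  refine le_iInf₂ fun t ht => ?_
  have hcover : f '' E ⊆ ⋃ i, f '' (t i ∩ E) := by
    rintro _ ⟨a, ha, rfl⟩
    obtain ⟨i, hi⟩ := mem_iUnion.1 (ht ha)
    exact mem_iUnion.2 ⟨i, a, ⟨hi, ha⟩, rfl⟩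
  calc packingMeasure (f '' E) ≤ ∑' i, packingPremeasure (f '' (t i ∩ E)) :=
        packingMeasure_le_tsum hcover
    _ ≤ ∑' i, C * packingPremeasure (t i) := ENNReal.tsum_le_tsum fun i =>
        (h _ inter_subset_right).trans (by gcongr; exact packingPremeasure_mono inter_subset_left)
    _ = C * ∑' i, packingPremeasure (t i) := ENNReal.tsum_mul_left

end

/-- An `L`-Lipschitz map `f : E → H`, `E ⊆ ℝ`, increases 1-dimensional packing premeasure
and packing measure by at most the factor `L`. -/
theorem statement4 {H : Type*} [NormedAddCommGroup H] [InnerProductSpace ℝ H]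
    (E : Set ℝ) (f : ℝ → H) (L : ℝ≥0) (hf : LipschitzOnWith L f E) :
    packingPremeasure (f '' E) ≤ (L : ℝ≥0∞) * packingPremeasure E ∧
    packingMeasure (f '' E) ≤ (L : ℝ≥0∞) * packingMeasure E :=
  ⟨hf.packingPremeasure_image_le,
    packingMeasure_image_le fun _ hA => (hf.mono hA).packingPremeasure_image_le⟩
end

section
/- Let μ be a pointwise doubling measure on a separable Hilbert space H, i.e., μ is finite on bounded sets and limsup_{r↓0} μ(B(x,2r))/μ(B(x,r)) < ∞ for μ-a.e. x. Then the restriction of μ to the set {x ∈ H : liminf_{r↓0} μ(B(x,r))/r = 0} is purely unrectifiable: it assigns zero measure to every set f(E) where E ⊂ [0,1] and f : [0,1] → H is Lipschitz. -/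
/-!
Fix `C`, `δ` and `ε > 0`. Every point `y` of `f(E)` with zero lower density at which `μ` is
`C`-doubling below scale `δ` is the centre of arbitrarily small balls with
`μ(B(y, 4r)) ≤ C² ε r`. By the Vitali covering lemma the set of such points has measure at most
`C² ε` times the sum of the radii of a disjoint family of closed balls centred on `f(E)`. Pulling
these balls back by the `K`-Lipschitz map `f` gives disjoint intervals of length `2r/K` centred
in `[0, 1]`, so that sum is at most `3K/2`, and letting `ε → 0` the set is `μ`-null. Almost
every point is `n`-doubling below scale `1/(n+1)` for some `n`, which covers the rest.
-/

open MeasureTheory Metric Set ENNReal NNReal Filter Topology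

section Densities

variable {X : Type*} [PseudoMetricSpace X] [MeasurableSpace X]

def zeroLowerDensitySet (μ : Measure X) : Set X :=
  {x | liminf (fun r : ℝ => μ (closedBall x r) / ENNReal.ofReal r) (𝓝[>] 0) = 0}

def doublingSet (μ : Measure X) (C : ℝ≥0∞) (δ : ℝ) : Set X :=
  {x | ∀ r ∈ Ioo 0 δ, μ (closedBall x (2 * r)) ≤ C * μ (closedBall x r)}

theorem exists_closedBall_le_of_mem_zeroLowerDensitySet {μ : Measure X} {x : X}
    (hx : x ∈ zeroLowerDensitySet μ) {ε : ℝ≥0∞} (hε : 0 < ε) {δ : ℝ} (hδ : 0 < δ) :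
    ∃ r ∈ Ioo 0 δ, μ (closedBall x r) ≤ ε * ENNReal.ofReal r := by
  have hfreq : ∃ᶠ r in 𝓝[>] (0 : ℝ), μ (closedBall x r) / ENNReal.ofReal r < ε :=
    frequently_lt_of_liminf_lt (by isBoundedDefault) (hx.symm ▸ hε)
  obtain ⟨r, hμr, hr⟩ := (hfreq.and_eventually (Ioo_mem_nhdsGT hδ)).exists
  have hr₀ : ENNReal.ofReal r ≠ 0 := (ENNReal.ofReal_pos.2 hr.1).ne'
  exact ⟨r, hr, ((ENNReal.div_lt_iff (Or.inl hr₀) (Or.inl ofReal_ne_top)).1 hμr).le⟩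

theorem measure_closedBall_four_mul_le_of_mem_doublingSet {μ : Measure X} {C : ℝ≥0∞} {δ : ℝ}
    {x : X} (hx : x ∈ doublingSet μ C δ) {r : ℝ} (hr : 0 < r) (hrδ : 2 * r < δ) :
    μ (closedBall x (4 * r)) ≤ C ^ 2 * μ (closedBall x r) :=
  calc μ (closedBall x (4 * r)) = μ (closedBall x (2 * (2 * r))) := by ring_nf
    _ ≤ C * μ (closedBall x (2 * r)) := hx (2 * r) ⟨by positivity, hrδ⟩
    _ ≤ C * (C * μ (closedBall x r)) := by gcongr; exact hx r ⟨hr, by linarith⟩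
    _ = C ^ 2 * μ (closedBall x r) := by ring

theorem exists_mem_doublingSet_of_limsup_lt_top {μ : Measure X} {x : X}
    (hx : limsup (fun r : ℝ => μ (closedBall x (2 * r)) / μ (closedBall x r)) (𝓝[>] 0) < ⊤) :
    ∃ n : ℕ, x ∈ doublingSet μ n (n + 1 : ℝ)⁻¹ := by
  obtain ⟨c, hxc, hc⟩ := exists_between hx
  obtain ⟨ε, hε, hεc⟩ := mem_nhdsGT_iff_exists_Ioo_subset.1 (eventually_lt_of_limsup_lt hxc)
  obtain ⟨N, hcN⟩ := ENNReal.exists_nat_gt hc.ne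
  obtain ⟨N', hN'ε⟩ := exists_nat_one_div_lt (mem_Ioi.1 hε)
  refine ⟨N + N' + 1, fun r hr => ?_⟩
  have hrε : r ∈ Ioo 0 ε := by
    refine ⟨hr.1, hr.2.trans (lt_of_le_of_lt ?_ hN'ε)⟩
    rw [one_div]
    gcongr
    linarith
  have hratio : μ (closedBall x (2 * r)) / μ (closedBall x r) ≤ (N + N' + 1 : ℕ) := by
    refine (hεc hrε).le.trans (hcN.le.trans ?_)
    exact_mod_cast (by omega : N ≤ N + N' + 1)
  rwa [ENNReal.div_le_iff_le_mul (Or.inr (natCast_ne_top _))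
    (Or.inr (Nat.cast_ne_zero.2 (Nat.succ_ne_zero _)))] at hratio

end Densities

theorem ENNReal.eq_zero_of_forall_le_mul {a M : ℝ≥0∞} (hM : M ≠ ⊤)
    (h : ∀ ε : ℝ≥0, 0 < ε → a ≤ ε * M) : a = 0 := by
  have hlim : Tendsto (fun ε : ℝ≥0 => (ε : ℝ≥0∞) * M) (𝓝[>] 0) (𝓝 0) := by
    simpa using ENNReal.Tendsto.mul_const
      ((ENNReal.continuous_coe.tendsto 0).mono_left nhdsWithin_le_nhds) (Or.inr hM)
  exact nonpos_iff_eq_zero.1 <| ge_of_tendsto hlim <|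
    eventually_nhdsWithin_of_forall fun ε hε => h ε hε

theorem tsum_ofReal_two_mul_le_three_of_pairwiseDisjoint_ball {ι : Type*} {u : Set ι}
    (hu : u.Countable) {t s : ι → ℝ} (ht : ∀ i ∈ u, t i ∈ Icc 0 1) (hs : ∀ i ∈ u, s i ≤ 1)
    (hdisj : u.PairwiseDisjoint fun i => ball (t i) (s i)) :
    ∑' i : u, ENNReal.ofReal (2 * s i) ≤ 3 := by
  have hsub : ⋃ i ∈ u, ball (t i) (s i) ⊆ Ioo (-1) 2 := by
    refine iUnion₂_subset fun i hi => ?_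
    rw [Real.ball_eq_Ioo]
    obtain ⟨ht₀, ht₁⟩ := ht i hi
    exact Ioo_subset_Ioo (by linarith [hs i hi]) (by linarith [hs i hi])
  calc ∑' i : u, ENNReal.ofReal (2 * s i) = volume (⋃ i ∈ u, ball (t i) (s i)) := by
        rw [measure_biUnion hu hdisj fun _ _ => measurableSet_ball]
        simp only [Real.volume_ball]
    _ ≤ volume (Ioo (-1 : ℝ) 2) := measure_mono hsub
    _ = 3 := by norm_num [Real.volume_Ioo]

theorem LipschitzOnWith.disjoint_ball_of_disjoint_closedBall {α X : Type*} [PseudoMetricSpace α]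
    [SeminormedAddCommGroup X] [NormedSpace ℝ X] {f : α → X} {K : ℝ≥0} {s : Set α}
    (hf : LipschitzOnWith K f s) (hK : 0 < K) {a b : α} (ha : a ∈ s) (hb : b ∈ s) {r r' : ℝ}
    (hr : 0 ≤ r) (hr' : 0 ≤ r') (h : Disjoint (closedBall (f a) r) (closedBall (f b) r')) :
    Disjoint (ball a (r / K)) (ball b (r' / K)) := by
  refine ball_disjoint_ball ?_
  rw [← add_div, div_le_iff₀' (by exact_mod_cast hK)]
  exact ((disjoint_closedBall_closedBall_iff hr hr').1 h).le.trans (hf.dist_le_mul a ha b hb)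

theorem LipschitzOnWith.tsum_ofReal_le_of_pairwiseDisjoint_closedBall {X : Type*}
    [SeminormedAddCommGroup X] [NormedSpace ℝ X] {s : Set ℝ} (hs : s ⊆ Icc 0 1) {f : ℝ → X}
    {K : ℝ≥0} (hf : LipschitzOnWith K f s) (hK : 0 < K) {u : Set X} (hus : u ⊆ f '' s)
    (hu : u.Countable) {ρ : X → ℝ} (hρ : ∀ y ∈ u, ρ y ∈ Icc 0 (K : ℝ))
    (hdisj : u.PairwiseDisjoint fun y => closedBall y (ρ y)) :
    ∑' y : u, ENNReal.ofReal (ρ y) ≤ ENNReal.ofReal (K / 2) * 3 := by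
  have hK' : (0 : ℝ) < K := hK
  choose! t hts htf using fun y (hy : y ∈ u) => hus hy
  have hdisj' : u.PairwiseDisjoint fun y => ball (t y) (ρ y / K) := by
    intro y hy y' hy' hne
    refine hf.disjoint_ball_of_disjoint_closedBall hK (hts y hy) (hts y' hy') (hρ y hy).1
      (hρ y' hy').1 ?_
    rw [htf y hy, htf y' hy']
    exact hdisj hy hy' hne
  have hpack := tsum_ofReal_two_mul_le_three_of_pairwiseDisjoint_ball hu
    (fun y hy => hs (hts y hy)) (fun y hy => (div_le_one hK').2 (hρ y hy).2) hdisj'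
  calc ∑' y : u, ENNReal.ofReal (ρ y)
      = ∑' y : u, ENNReal.ofReal (K / 2) * ENNReal.ofReal (2 * (ρ y / K)) := by
        refine tsum_congr fun y => ?_
        rw [← ENNReal.ofReal_mul (by positivity)]
        congr 1
        field_simp
    _ ≤ ENNReal.ofReal (K / 2) * 3 := by
        rw [ENNReal.tsum_mul_left]
        gcongr

theorem measure_le_mul_of_forall_closedBall_le_of_packing_le {X : Type*} [PseudoMetricSpace X]
    [TopologicalSpace.SeparableSpace X] [MeasurableSpace X] (μ : Measure X) {A : Set X}
    {c M : ℝ≥0∞} {δ : ℝ}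
    (hsmall : ∀ y ∈ A, ∃ r ∈ Ioo 0 δ, μ (closedBall y (4 * r)) ≤ c * ENNReal.ofReal r)
    (hpack : ∀ u ⊆ A, u.Countable → ∀ ρ : X → ℝ, (∀ y ∈ u, ρ y ∈ Ioo 0 δ) →
      u.PairwiseDisjoint (fun y => closedBall y (ρ y)) → ∑' y : u, ENNReal.ofReal (ρ y) ≤ M) :
    μ A ≤ c * M := by
  choose! ρ hρ hμρ using hsmall
  obtain ⟨u, huA, hdisj, hcov⟩ := Vitali.exists_disjoint_subfamily_covering_enlargement_closedBall
    A id ρ δ (fun y hy => (hρ y hy).2.le) 4 (by norm_num)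
  have hu : u.Countable := hdisj.countable_of_nonempty_interior fun y hy =>
    ⟨y, ball_subset_interior_closedBall (mem_ball_self (hρ y (huA hy)).1)⟩
  have hAu : A ⊆ ⋃ y ∈ u, closedBall y (4 * ρ y) := fun a ha => by
    obtain ⟨b, hb, hab⟩ := hcov a ha
    exact mem_biUnion hb (hab (mem_closedBall_self (hρ a ha).1.le))
  calc μ A ≤ ∑' y : u, μ (closedBall y (4 * ρ y)) :=
        (measure_mono hAu).trans (measure_biUnion_le μ hu _)
    _ ≤ ∑' y : u, c * ENNReal.ofReal (ρ y) :=
        ENNReal.tsum_le_tsum fun y => hμρ y (huA y.2)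
    _ ≤ c * M := by
        rw [ENNReal.tsum_mul_left]
        exact mul_le_mul_right (hpack u huA hu ρ (fun y hy => hρ y (huA hy)) hdisj) c

theorem measure_image_inter_zeroLowerDensitySet_inter_doublingSet_eq_zero {X : Type*}
    [NormedAddCommGroup X] [NormedSpace ℝ X] [SecondCountableTopology X] [MeasurableSpace X]
    (μ : Measure X) {s : Set ℝ} (hs : s ⊆ Icc 0 1) {f : ℝ → X} {K : ℝ≥0}
    (hf : LipschitzOnWith K f s) {C : ℝ≥0∞} (hC : C ≠ ⊤) {δ : ℝ} (hδ : 0 < δ) :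
    μ (f '' s ∩ zeroLowerDensitySet μ ∩ doublingSet μ C δ) = 0 := by
  have hf' : LipschitzOnWith (K + 1) f s := hf.weaken le_self_add
  have hK : (1 : ℝ) ≤ (K + 1 : ℝ≥0) := by push_cast; linarith [K.coe_nonneg]
  refine ENNReal.eq_zero_of_forall_le_mul (M := C ^ 2 * (ENNReal.ofReal ((K + 1 : ℝ≥0) / 2) * 3))
    (by finiteness) fun ε hε => ?_
  refine (measure_le_mul_of_forall_closedBall_le_of_packing_le μ (c := C ^ 2 * ε)
    (M := ENNReal.ofReal ((K + 1 : ℝ≥0) / 2) * 3) (δ := min (δ / 2) 1)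
    (fun y hy => ?_) fun u hu hc ρ hρ hdisj => ?_).trans_eq (by ring)
  · obtain ⟨r, hr, hμr⟩ := exists_closedBall_le_of_mem_zeroLowerDensitySet hy.1.2
      (ENNReal.coe_pos.2 hε) (lt_min (half_pos hδ) one_pos)
    refine ⟨r, hr, ?_⟩
    calc μ (closedBall y (4 * r)) ≤ C ^ 2 * μ (closedBall y r) :=
          measure_closedBall_four_mul_le_of_mem_doublingSet hy.2 hr.1
            (by linarith [hr.2.trans_le (min_le_left _ _)])
      _ ≤ C ^ 2 * (ε * ENNReal.ofReal r) := by gcongr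
      _ = C ^ 2 * ε * ENNReal.ofReal r := by ring
  · refine hf'.tsum_ofReal_le_of_pairwiseDisjoint_closedBall hs (by positivity)
      (fun y hy => (hu hy).1.1) hc (fun y hy => ⟨(hρ y hy).1.le, ?_⟩) hdisj
    linarith [(hρ y hy).2.trans_le (min_le_right _ _)]

theorem statement6_general {H : Type*} [NormedAddCommGroup H] [InnerProductSpace ℝ H]
    [SecondCountableTopology H] [MeasurableSpace H]
    (μ : Measure H)
    (hdoub : ∀ᵐ x ∂μ,
      Filter.limsup (fun r : ℝ => μ (closedBall x (2 * r)) / μ (closedBall x r))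
        (nhdsWithin 0 (Set.Ioi 0)) < ⊤)
    (E : Set ℝ) (hE : E ⊆ Set.Icc 0 1) (f : ℝ → H) (K : ℝ≥0)
    (hf : LipschitzOnWith K f (Set.Icc 0 1)) :
    μ (f '' E ∩ {x | Filter.liminf (fun r : ℝ => μ (closedBall x r) / ENNReal.ofReal r)
        (nhdsWithin 0 (Set.Ioi 0)) = 0}) = 0 := by
  change μ (f '' E ∩ zeroLowerDensitySet μ) = 0
  have hcover : f '' E ∩ zeroLowerDensitySet μ ⊆
      {x | ¬ limsup (fun r : ℝ => μ (closedBall x (2 * r)) / μ (closedBall x r)) (𝓝[>] 0) < ⊤} ∪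
        ⋃ n : ℕ, f '' E ∩ zeroLowerDensitySet μ ∩ doublingSet μ n (n + 1 : ℝ)⁻¹ := by
    intro x hx
    by_cases hx_doub : limsup (fun r : ℝ => μ (closedBall x (2 * r)) / μ (closedBall x r))
        (𝓝[>] 0) < ⊤
    · obtain ⟨n, hn⟩ := exists_mem_doublingSet_of_limsup_lt_top hx_doub
      exact Or.inr (mem_iUnion.2 ⟨n, hx, hn⟩)
    · exact Or.inl hx_doub
  refine measure_mono_null hcover <| measure_union_null (ae_iff.1 hdoub) <|
    measure_iUnion_null fun n => ?_
  exact measure_image_inter_zeroLowerDensitySet_inter_doublingSet_eq_zero μ hE (hf.mono hE)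
    (natCast_ne_top n) (by positivity)

/-- For a pointwise doubling measure `μ` on a separable Hilbert space, the restriction of `μ`
to the set of points of zero lower 1-density is purely unrectifiable: it vanishes on every
Lipschitz image `f(E)` with `E ⊆ [0,1]`. -/
theorem statement6 {H : Type*} [NormedAddCommGroup H] [InnerProductSpace ℝ H]
    [SecondCountableTopology H] [CompleteSpace H] [MeasurableSpace H] [BorelSpace H]
    (μ : Measure H)
    (hfin : ∀ (x : H) (r : ℝ), μ (closedBall x r) < ⊤)
    (hdoub : ∀ᵐ x ∂μ,
      Filter.limsup (fun r : ℝ => μ (closedBall x (2 * r)) / μ (closedBall x r))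
        (nhdsWithin 0 (Set.Ioi 0)) < ⊤)
    (E : Set ℝ) (hE : E ⊆ Set.Icc 0 1) (f : ℝ → H) (K : ℝ≥0)
    (hf : LipschitzOnWith K f (Set.Icc 0 1)) :
    μ (f '' E ∩ {x | Filter.liminf (fun r : ℝ => μ (closedBall x r) / ENNReal.ofReal r)
        (nhdsWithin 0 (Set.Ioi 0)) = 0}) = 0 :=
  statement6_general μ hdoub E hE f K hf
end

section
/- Let H be a Hilbert space, x, y ∈ H distinct points, V an m-dimensional linear subspace, and α ∈ (0,1). If dist(y − x, V) > (α + (1−α)/2)·|x − y| (i.e., y lies in the bad cone with the larger aperture parameter α + (1−α)/2), then there exists a constant η_α > 0 depending only on α such that the ball B(y, η_α·|x−y|) is contained in the bad cone C_B(x, V, α) = { z ∈ H : dist(z − x, V) > α|z − x| }. -/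
open Metric Set

/-- The bad cone at `x` with respect to the subspace `V` and aperture `α`. -/
def badCone {H : Type*} [NormedAddCommGroup H] [InnerProductSpace ℝ H]
    (x : H) (V : Submodule ℝ H) (α : ℝ) : Set H :=
  {y | α * dist y x < Metric.infDist (y - x) (V : Set H)}

section BadCone

variable {H : Type*} [NormedAddCommGroup H] [InnerProductSpace ℝ H]
  {x y z : H} {V : Submodule ℝ H} {α β η : ℝ}

/-- Both `infDist (· - x) V` and `dist · x` are 1-Lipschitz, so moving from `y` to `z` uses up at
most `(1 + α) * dist z y` of the margin, which the aperture gap `β - α` covers. -/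
theorem mem_badCone_of_mem_closedBall (hα : 0 ≤ α) (hgap : η * (1 + α) ≤ β - α)
    (hy : y ∈ badCone x V β) (hz : z ∈ closedBall y (η * dist x y)) :
    z ∈ badCone x V α := by
  rw [badCone, mem_ofPred_eq] at hy ⊢
  rw [mem_closedBall, dist_comm x y] at hz
  have hinfDist : infDist (y - x) V ≤ infDist (z - x) V + dist z y := by
    simpa only [dist_sub_right, dist_comm y z] using
      infDist_le_infDist_add_dist (x := y - x) (y := z - x) (s := (V : Set H))
  have hdist : dist z x ≤ dist z y + dist y x := dist_triangle z y x
  calc α * dist z x ≤ α * ((1 + η) * dist y x) := by gcongr; linarith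
    _ = α * (1 + η) * dist y x := by ring
    _ ≤ (β - η) * dist y x := by gcongr; linarith
    _ < infDist (z - x) V := by linarith

end BadCone

/-- If `y` lies in the bad cone at `x` with the larger aperture `α + (1-α)/2`, then a whole
ball around `y` of radius `η_α · |x - y|` lies in the bad cone of aperture `α`, where
`η_α > 0` depends only on `α`. -/
theorem statement9 {H : Type*} [NormedAddCommGroup H] [InnerProductSpace ℝ H]
    (m : ℕ) (α : ℝ) (hα : α ∈ Set.Ioo (0 : ℝ) 1) :
    ∃ η > (0 : ℝ), ∀ (x y : H) (V : Submodule ℝ H), FiniteDimensional ℝ V →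
      Module.finrank ℝ V = m → x ≠ y →
      y ∈ badCone x V (α + (1 - α) / 2) →
      Metric.closedBall y (η * dist x y) ⊆ badCone x V α := by
  obtain ⟨hα0, hα1⟩ := hα
  -- chosen so that `η * (1 + α)` is exactly the aperture gap `(1 - α) / 2`
  refine ⟨(1 - α) / (2 * (1 + α)), by apply div_pos <;> linarith, ?_⟩
  intro x y V _ _ _ hy z hz
  refine mem_badCone_of_mem_closedBall hα0.le (le_of_eq ?_) hy hz
  field_simp
  ring
end

section
/- There exists a pointwise doubling, 1-rectifiable measure μ on a separable infinite-dimensional Hilbert space H whose support is all of H. Concretely: let V₀ be a 2-dimensional subspace, {x_i}_{i≥1} dense in V₀^⊥, V_i = V₀ + x_i, let ν be a doubling 1-rectifiable measure on ℝ² with support ℝ² and doubling constant C_ν, let ν_i be the pushforward-type measure ν_i(E) = ν(π_i(E ∩ V_i)) where π_i identifies V_i with ℝ², and let c_i > 0 be summable. Then μ = ∑_{i≥0} c_i ν_i is finite on bounded sets, has support H, is 1-rectifiable, and satisfies limsup_{r↓0} μ(B(y,2r))/μ(B(y,r)) ≤ 2C_ν for μ-a.e. y. -/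
open MeasureTheory Metric Set ENNReal NNReal Filter
open scoped InnerProductSpace

set_option maxHeartbeats 4000000 in
/-- Given a doubling, 1-rectifiable measure `ν` on `ℝ²` with full support and doubling
constant `C` (the Garnett–Killip–Schul measure), there exists a measure `μ` on a separable
infinite-dimensional Hilbert space `H` that is finite on bounded sets, has full support,
is 1-rectifiable (carried by countably many Lipschitz images of `[0,1]`), and is pointwise
doubling with `limsup_{r↓0} μ(B(y,2r))/μ(B(y,r)) ≤ 2C` for `μ`-a.e. `y`. -/
theorem statement19 {H : Type*} [NormedAddCommGroup H] [InnerProductSpace ℝ H]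
    [SecondCountableTopology H] [CompleteSpace H] [MeasurableSpace H] [BorelSpace H]
    (hinf : ¬FiniteDimensional ℝ H)
    (ν : Measure (EuclideanSpace ℝ (Fin 2))) (C : ℝ≥0∞)
    (hνfin : ∀ (x : EuclideanSpace ℝ (Fin 2)) (r : ℝ), ν (Metric.closedBall x r) < ⊤)
    (hνdoub : ∀ (x : EuclideanSpace ℝ (Fin 2)), ∀ r > (0 : ℝ),
      ν (Metric.closedBall x (2 * r)) ≤ C * ν (Metric.closedBall x r))
    (hνsupp : ∀ (x : EuclideanSpace ℝ (Fin 2)), ∀ r > (0 : ℝ), 0 < ν (Metric.ball x r))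
    (hνrect : ∃ f : ℕ → (ℝ → EuclideanSpace ℝ (Fin 2)),
      (∀ i, ∃ K : ℝ≥0, LipschitzOnWith K (f i) (Set.Icc 0 1)) ∧
      ν (Set.univ \ ⋃ i, f i '' Set.Icc 0 1) = 0) :
    ∃ (φ : ℕ → EuclideanSpace ℝ (Fin 2) → H) (c : ℕ → ℝ≥0∞) (μ : Measure H),
      (∀ j, Isometry (φ j)) ∧
      (∀ j v, φ j v - φ j 0 = φ 0 v - φ 0 0) ∧
      (∀ j, c j ≠ 0) ∧ (∑' j, c j) ≠ ⊤ ∧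
      μ = Measure.sum (fun j => c j • ν.map (φ j)) ∧
      (∀ (x : H) (r : ℝ), μ (Metric.closedBall x r) < ⊤) ∧
      (∀ x : H, ∀ r > (0 : ℝ), 0 < μ (Metric.ball x r)) ∧
      (∃ f : ℕ → (ℝ → H), (∀ i, ∃ K : ℝ≥0, LipschitzOnWith K (f i) (Set.Icc 0 1)) ∧
        μ (Set.univ \ ⋃ i, f i '' Set.Icc 0 1) = 0) ∧
      (∀ᵐ y ∂μ,
        Filter.limsup
          (fun r : ℝ => μ (Metric.closedBall y (2 * r)) / μ (Metric.closedBall y r))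
          (nhdsWithin 0 (Set.Ioi 0)) ≤ 2 * C) := by
  classical
  -- Step 1: an orthonormal pair in `H`.
  obtain ⟨w, b, hbcoe⟩ := exists_hilbertBasis ℝ H
  have hw : Orthonormal ℝ ((↑) : w → H) := hbcoe ▸ b.orthonormal
  have hwinf : w.Infinite := by
    by_contra hfin
    rw [Set.not_infinite] at hfin
    have hfd : FiniteDimensional ℝ (Submodule.span ℝ w) := FiniteDimensional.span_of_finite ℝ hfin
    have hclosed : IsClosed ((Submodule.span ℝ w : Submodule ℝ H) : Set H) :=
      Submodule.closed_of_finiteDimensional _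
    have hdense := b.dense_span
    rw [hbcoe, Subtype.range_coe] at hdense
    rw [hclosed.submodule_topologicalClosure_eq] at hdense
    haveI : FiniteDimensional ℝ (⊤ : Submodule ℝ H) := hdense ▸ hfd
    exact hinf (Submodule.topEquiv.finiteDimensional)
  obtain ⟨e0, he0, e1, he1, hne⟩ := hwinf.nontrivial
  have hne' : (⟨e0, he0⟩ : w) ≠ ⟨e1, he1⟩ := by simpa using hne
  have hnorm0 : ‖e0‖ = 1 := hw.1 ⟨e0, he0⟩
  have hnorm1 : ‖e1‖ = 1 := hw.1 ⟨e1, he1⟩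
  have h00 : ⟪e0, e0⟫_ℝ = 1 := by rw [real_inner_self_eq_norm_sq, hnorm0]; norm_num
  have h11 : ⟪e1, e1⟫_ℝ = 1 := by rw [real_inner_self_eq_norm_sq, hnorm1]; norm_num
  have h01 : ⟪e0, e1⟫_ℝ = 0 := hw.2 hne'
  have h10 : ⟪e1, e0⟫_ℝ = 0 := by rw [real_inner_comm]; exact h01
  -- Step 2: basic geometry of the embedded planes.
  set ψ : EuclideanSpace ℝ (Fin 2) → H := fun v => v 0 • e0 + v 1 • e1 with hψ
  have hψinner : ∀ v u : EuclideanSpace ℝ (Fin 2),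
      ⟪ψ v, ψ u⟫_ℝ = v 0 * u 0 + v 1 * u 1 := by
    intro v u
    simp [hψ, inner_add_left, inner_add_right, real_inner_smul_left, real_inner_smul_right,
      h00, h01, h10, h11]
    rw [hnorm0, hnorm1]; ring
  have hE2norm : ∀ v : EuclideanSpace ℝ (Fin 2), ‖v‖ ^ 2 = v 0 ^ 2 + v 1 ^ 2 := by
    intro v
    simp [EuclideanSpace.norm_sq_eq, Fin.sum_univ_two]
  have hψnorm : ∀ v : EuclideanSpace ℝ (Fin 2), ‖ψ v‖ = ‖v‖ := by
    intro v
    have h1 : ‖ψ v‖ ^ 2 = ‖v‖ ^ 2 := by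
      rw [← real_inner_self_eq_norm_sq, hψinner, hE2norm]; ring
    nlinarith [norm_nonneg (ψ v), norm_nonneg v]
  have hψsub : ∀ v u : EuclideanSpace ℝ (Fin 2), ψ v - ψ u = ψ (v - u) := by
    intro v u
    simp only [hψ, PiLp.sub_apply, sub_smul]
    abel
  have hperp : ∀ z : H, ⟪z, e0⟫_ℝ = 0 → ⟪z, e1⟫_ℝ = 0 →
      ∀ v : EuclideanSpace ℝ (Fin 2), ⟪z, ψ v⟫_ℝ = 0 := by
    intro z hz0 hz1 v
    simp [hψ, inner_add_right, real_inner_smul_right, hz0, hz1]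
  have hbessel : ∀ z : H, ⟪z, e0⟫_ℝ ^ 2 + ⟪z, e1⟫_ℝ ^ 2 ≤ ‖z‖ ^ 2 := by
    intro z
    set p : H := ⟪z, e0⟫_ℝ • e0 + ⟪z, e1⟫_ℝ • e1 with hp
    have hpp : ⟪p, p⟫_ℝ = ⟪z, e0⟫_ℝ ^ 2 + ⟪z, e1⟫_ℝ ^ 2 := by
      simp only [hp, inner_add_left, inner_add_right, real_inner_smul_left, real_inner_smul_right,
        h00, h01, h10, h11]
      ring
    have hzp : ⟪z, p⟫_ℝ = ⟪z, e0⟫_ℝ ^ 2 + ⟪z, e1⟫_ℝ ^ 2 := by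
      simp [hp, inner_add_right, real_inner_smul_right]
      ring
    have hinner0 : ⟪p, z - p⟫_ℝ = 0 := by
      rw [inner_sub_right, hpp, real_inner_comm, hzp, sub_self]
    have hdecomp : ‖z‖ ^ 2 = ‖p‖ ^ 2 + 2 * ⟪p, z - p⟫_ℝ + ‖z - p‖ ^ 2 := by
      have h := norm_add_sq_real p (z - p)
      rw [show p + (z - p) = z by abel] at h
      exact h
    have hpnorm : ‖p‖ ^ 2 = ⟪z, e0⟫_ℝ ^ 2 + ⟪z, e1⟫_ℝ ^ 2 := by
      rw [← real_inner_self_eq_norm_sq, hpp]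
    nlinarith [sq_nonneg ‖z - p‖]
  -- Step 3: the dense family of planes.
  haveI : Nonempty H := ⟨0⟩
  obtain ⟨y, hy⟩ := TopologicalSpace.exists_dense_seq H
  set x : ℕ → H := fun j => y j - ⟪y j, e0⟫_ℝ • e0 - ⟪y j, e1⟫_ℝ • e1 with hx
  have hx0 : ∀ j, ⟪x j, e0⟫_ℝ = 0 := by
    intro j
    simp [hx, inner_sub_left, real_inner_smul_left, h00, h10, hnorm0]
  have hx1 : ∀ j, ⟪x j, e1⟫_ℝ = 0 := by
    intro j
    simp [hx, inner_sub_left, real_inner_smul_left, h01, h11, hnorm1]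
  set φ : ℕ → EuclideanSpace ℝ (Fin 2) → H := fun j v => x j + ψ v with hφ
  have hφnormsq : ∀ j k (v u : EuclideanSpace ℝ (Fin 2)),
      ‖φ j v - φ k u‖ ^ 2 = ‖x j - x k‖ ^ 2 + ‖v - u‖ ^ 2 := by
    intro j k v u
    have hrw : φ j v - φ k u = (x j - x k) + ψ (v - u) := by
      rw [← hψsub]; simp only [hφ]; abel
    have hzero : ⟪x j - x k, ψ (v - u)⟫_ℝ = 0 := by
      refine hperp _ ?_ ?_ _
      · rw [inner_sub_left, hx0, hx0, sub_self]
      · rw [inner_sub_left, hx1, hx1, sub_self]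
    rw [hrw, norm_add_sq_real, hzero, hψnorm]
    ring
  have hφdist : ∀ j (v u : EuclideanSpace ℝ (Fin 2)), dist (φ j v) (φ j u) = dist v u := by
    intro j v u
    rw [dist_eq_norm, dist_eq_norm]
    have h1 := hφnormsq j j v u
    rw [sub_self] at h1
    simp only [norm_zero] at h1
    nlinarith [norm_nonneg (φ j v - φ j u), norm_nonneg (v - u)]
  set Q : H → EuclideanSpace ℝ (Fin 2) :=
    fun z => (WithLp.equiv 2 (Fin 2 → ℝ)).symm ![⟪z, e0⟫_ℝ, ⟪z, e1⟫_ℝ] with hQdef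
  have hQapp0 : ∀ z, Q z 0 = ⟪z, e0⟫_ℝ := by
    intro z; simp [hQdef]
  have hQapp1 : ∀ z, Q z 1 = ⟪z, e1⟫_ℝ := by
    intro z; simp [hQdef]
  have hψe0 : ∀ v : EuclideanSpace ℝ (Fin 2), ⟪ψ v, e0⟫_ℝ = v 0 := by
    intro v; simp [hψ, inner_add_left, real_inner_smul_left, h00, h10, hnorm0]
  have hψe1 : ∀ v : EuclideanSpace ℝ (Fin 2), ⟪ψ v, e1⟫_ℝ = v 1 := by
    intro v; simp [hψ, inner_add_left, real_inner_smul_left, h01, h11, hnorm1]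
  have hφe0 : ∀ j v, ⟪φ j v, e0⟫_ℝ = v 0 := by
    intro j v; simp only [hφ]; rw [inner_add_left, hx0, hψe0, zero_add]
  have hφe1 : ∀ j v, ⟪φ j v, e1⟫_ℝ = v 1 := by
    intro j v; simp only [hφ]; rw [inner_add_left, hx1, hψe1, zero_add]
  have hQφ : ∀ j v, Q (φ j v) = v := by
    intro j v
    ext i
    fin_cases i
    · rw [show ((⟨0, by norm_num⟩ : Fin 2)) = (0 : Fin 2) from rfl, hQapp0, hφe0]
    · rw [show ((⟨1, by norm_num⟩ : Fin 2)) = (1 : Fin 2) from rfl, hQapp1, hφe1]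
  have hQlip : ∀ z z' : H, ‖Q z - Q z'‖ ≤ ‖z - z'‖ := by
    intro z z'
    have h1 : ‖Q z - Q z'‖ ^ 2 ≤ ‖z - z'‖ ^ 2 := by
      rw [hE2norm]
      have c0 : (Q z - Q z') 0 = ⟪z - z', e0⟫_ℝ := by
        rw [PiLp.sub_apply, hQapp0, hQapp0, inner_sub_left]
      have c1 : (Q z - Q z') 1 = ⟪z - z', e1⟫_ℝ := by
        rw [PiLp.sub_apply, hQapp1, hQapp1, inner_sub_left]
      rw [c0, c1]
      exact hbessel (z - z')
    nlinarith [norm_nonneg (Q z - Q z'), norm_nonneg (z - z')]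
  have hyφ : ∀ j, φ j (Q (y j)) = y j := by
    intro j
    simp only [hφ, hψ, hx, hQapp0, hQapp1]
    abel
  -- Step 4: the measure.
  have hψcont : Continuous ψ := by
    exact ((EuclideanSpace.proj (0 : Fin 2)).continuous.smul continuous_const).add
      ((EuclideanSpace.proj (1 : Fin 2)).continuous.smul continuous_const)
  have hφcont : ∀ j, Continuous (φ j) := fun j => continuous_const.add hψcont
  have hφmeas : ∀ j, Measurable (φ j) := fun j => (hφcont j).measurable
  set c : ℕ → ℝ≥0∞ := fun j => 2⁻¹ ^ j with hc
  have hcsum : ∑' j, c j = 2 := by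
    simp only [hc]
    rw [ENNReal.tsum_geometric, ENNReal.one_sub_inv_two, inv_inv]
  have hcne0 : ∀ j, c j ≠ 0 :=
    fun j => pow_ne_zero _ (ENNReal.inv_ne_zero.mpr ENNReal.ofNat_ne_top)
  set μ : Measure H := Measure.sum (fun j => c j • ν.map (φ j)) with hμ
  have hμapp : ∀ s : Set H, MeasurableSet s → μ s = ∑' j, c j * ν (φ j ⁻¹' s) := by
    intro s hs
    rw [hμ, Measure.sum_apply _ hs]
    congr 1
    funext j
    rw [Measure.smul_apply, Measure.map_apply (hφmeas j) hs, smul_eq_mul]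
  have hpre : ∀ (j : ℕ) (R : ℝ) (z : H), φ j ⁻¹' Metric.closedBall z R ⊆
      Metric.closedBall (Q z) R := by
    intro j R z v hv
    simp only [mem_preimage, Metric.mem_closedBall, dist_eq_norm] at hv ⊢
    calc ‖v - Q z‖ = ‖Q (φ j v) - Q z‖ := by rw [hQφ]
      _ ≤ ‖φ j v - z‖ := hQlip _ _
      _ ≤ R := hv
  have hfin : ∀ (z : H) (r : ℝ), μ (Metric.closedBall z r) < ⊤ := by
    intro z r
    calc μ (Metric.closedBall z r) = ∑' j, c j * ν (φ j ⁻¹' Metric.closedBall z r) :=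
          hμapp _ measurableSet_closedBall
      _ ≤ ∑' j, c j * ν (Metric.closedBall (Q z) r) :=
          ENNReal.tsum_le_tsum fun j => mul_le_mul_right (measure_mono (hpre j r z)) _
      _ = 2 * ν (Metric.closedBall (Q z) r) := by rw [ENNReal.tsum_mul_right, hcsum]
      _ < ⊤ := ENNReal.mul_lt_top (by norm_num) (hνfin _ _)
  refine ⟨φ, c, μ, fun j => Isometry.of_dist_eq (hφdist j), (fun j v => by simp only [hφ]; abel), hcne0,
    (by rw [hcsum]; exact ENNReal.ofNat_ne_top), hμ, hfin, ?_, ?_, ?_⟩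
  -- full support
  · intro z r hr
    obtain ⟨j, hj⟩ : ∃ j, dist z (y j) < r / 2 :=
      Metric.denseRange_iff.mp hy z (r / 2) (by linarith)
    have hsub : Metric.ball (Q (y j)) (r / 2) ⊆ φ j ⁻¹' Metric.ball z r := by
      intro v hv
      simp only [mem_ball, mem_preimage] at hv ⊢
      calc dist (φ j v) z ≤ dist (φ j v) (y j) + dist (y j) z := dist_triangle _ _ _
        _ = dist v (Q (y j)) + dist (y j) z := by
            rw [← hyφ j, hφdist, hyφ j]
        _ < r / 2 + r / 2 := add_lt_add hv (by rw [dist_comm]; exact hj)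
        _ = r := by ring
    have h1 : c j * ν (φ j ⁻¹' Metric.ball z r) ≤ μ (Metric.ball z r) := by
      rw [hμapp _ measurableSet_ball]
      exact ENNReal.le_tsum j
    have h2 : 0 < c j * ν (φ j ⁻¹' Metric.ball z r) := by
      refine ENNReal.mul_pos (hcne0 j) ?_
      have := hνsupp (Q (y j)) (r / 2) (by linarith)
      exact (lt_of_lt_of_le this (measure_mono hsub)).ne'
    exact lt_of_lt_of_le h2 h1
  -- rectifiability
  · obtain ⟨f, hfl, hf0⟩ := hνrect
    refine ⟨fun n => φ (Nat.unpair n).1 ∘ f (Nat.unpair n).2, ?_, ?_⟩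
    · intro n
      obtain ⟨K, hK⟩ := hfl (Nat.unpair n).2
      refine ⟨K, ?_⟩
      have hφ1 : LipschitzWith 1 (φ (Nat.unpair n).1) := by
        apply LipschitzWith.of_dist_le_mul
        intro a bb
        rw [hφdist, NNReal.coe_one, one_mul]
      simpa using hφ1.comp_lipschitzOnWith hK
    · set U := ⋃ n, (φ (Nat.unpair n).1 ∘ f (Nat.unpair n).2) '' Set.Icc (0:ℝ) 1 with hU
      have hUmeas : MeasurableSet U := by
        refine MeasurableSet.iUnion fun n => ?_
        obtain ⟨K, hK⟩ := hfl (Nat.unpair n).2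
        have hcompact : IsCompact ((φ (Nat.unpair n).1 ∘ f (Nat.unpair n).2) '' Set.Icc (0:ℝ) 1) :=
          isCompact_Icc.image_of_continuousOn
            ((hφcont _).comp_continuousOn hK.continuousOn)
        exact hcompact.isClosed.measurableSet
      rw [hμapp _ (MeasurableSet.univ.diff hUmeas)]
      have hterm : ∀ j, ν (φ j ⁻¹' (Set.univ \ U)) = 0 := by
        intro j
        refine measure_mono_null ?_ hf0
        intro v hv
        simp only [mem_preimage, mem_diff, mem_univ, true_and] at hv ⊢
        intro hvmem
        apply hv
        obtain ⟨i, t, ht, hft⟩ := by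
          simpa only [mem_iUnion, mem_image] using hvmem
        simp only [hU, mem_iUnion, mem_image]
        refine ⟨Nat.pair j i, t, ht, ?_⟩
        simp only [Nat.unpair_pair, Function.comp_apply, hft]
      refine ENNReal.tsum_eq_zero.mpr fun j => ?_
      rw [hterm j, mul_zero]
  -- pointwise doubling
  · -- almost every point lies on one of the planes
    have hrange : ∀ j, Set.range (φ j) =
        (fun z : H => z - ⟪z, e0⟫_ℝ • e0 - ⟪z, e1⟫_ℝ • e1) ⁻¹' {x j} := by
      intro j
      ext z
      simp only [mem_range, mem_preimage, mem_singleton_iff]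
      constructor
      · rintro ⟨v, rfl⟩
        rw [hφe0, hφe1]
        simp only [hφ, hψ]
        abel
      · intro hz
        refine ⟨Q z, ?_⟩
        simp only [hφ, hψ, hQapp0, hQapp1, ← hz]
        abel
    have hcontmap : Continuous fun z : H => z - ⟪z, e0⟫_ℝ • e0 - ⟪z, e1⟫_ℝ • e1 :=
      (continuous_id.sub ((continuous_id.inner continuous_const).smul continuous_const)).sub
        ((continuous_id.inner continuous_const).smul continuous_const)
    set Good : Set H := ⋃ j, Set.range (φ j) with hGood
    have hGoodmeas : MeasurableSet Good := by
      refine MeasurableSet.iUnion fun j => ?_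
      rw [hrange]
      exact (isClosed_singleton.preimage hcontmap).measurableSet
    have hGoodnull : μ Goodᶜ = 0 := by
      rw [hμapp _ hGoodmeas.compl]
      have hempty : ∀ j, φ j ⁻¹' Goodᶜ = ∅ := by
        intro j
        rw [eq_empty_iff_forall_notMem]
        intro v hv
        exact hv (mem_iUnion.mpr ⟨j, mem_range_self v⟩)
      simp [hempty]
    have hae : ∀ᵐ z ∂μ, z ∈ Good := by
      rw [MeasureTheory.ae_iff]
      exact hGoodnull
    filter_upwards [hae] with z hz
    obtain ⟨i, hi⟩ := mem_iUnion.mp hz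
    obtain ⟨u, rfl⟩ := hi
    -- total mass on the plane through `φ i u`
    set a : ℝ≥0∞ := ∑' j, (if x j = x i then c j else 0) with ha
    have hcia : c i ≤ a := by
      have h := ENNReal.le_tsum (f := fun j => if x j = x i then c j else 0) i
      simpa using h
    have ha0 : a ≠ 0 := fun h => hcne0 i (le_antisymm (h ▸ hcia) zero_le)
    obtain ⟨n, hn⟩ := ENNReal.exists_inv_two_pow_lt ha0
    set N : ℕ := n + 1 with hN
    -- the tail of the series is small
    have htail : ∑' j, (if N ≤ j then c j else 0) ≤ 2⁻¹ ^ n := by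
      have hinj : Function.Injective fun k : ℕ => k + N := add_left_injective N
      have hsupp : Function.support (fun j => if N ≤ j then c j else 0) ⊆
          Set.range (fun k : ℕ => k + N) := by
        intro j hj
        simp only [Function.mem_support] at hj
        have hNj : N ≤ j := by by_contra h; simp [h] at hj
        exact ⟨j - N, Nat.sub_add_cancel hNj⟩
      have heq := hinj.tsum_eq (f := fun j => if N ≤ j then c j else 0) hsupp
      rw [← heq]
      refine le_of_eq ?_
      have hterm : ∀ k : ℕ, (if N ≤ k + N then c (k + N) else 0) = 2⁻¹ ^ k * 2⁻¹ ^ N := by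
        intro k
        rw [if_pos (Nat.le_add_left _ _)]
        simp only [hc]
        rw [pow_add]
      calc (∑' k : ℕ, if N ≤ k + N then c (k + N) else 0)
          = (∑' k : ℕ, (2⁻¹ : ℝ≥0∞) ^ k) * 2⁻¹ ^ N := by
            simp_rw [hterm]; rw [ENNReal.tsum_mul_right]
        _ = 2 * 2⁻¹ ^ N := by
            rw [ENNReal.tsum_geometric, ENNReal.one_sub_inv_two, inv_inv, mul_comm]
        _ = 2⁻¹ ^ n := by
            rw [hN, pow_succ, ← mul_assoc, mul_comm (2 : ℝ≥0∞) (2⁻¹ ^ n), mul_assoc,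
              ENNReal.mul_inv_cancel (by norm_num) ENNReal.ofNat_ne_top, mul_one]
    -- a radius below which no other nearby plane interferes
    have hr0 : ∃ r₀ : ℝ, 0 < r₀ ∧ ∀ j, j < N → x j ≠ x i → 2 * r₀ < ‖x j - x i‖ := by
      by_cases hs : ((Finset.range N).filter (fun j => x j ≠ x i)).Nonempty
      · set m := ((Finset.range N).filter fun j => x j ≠ x i).inf' hs fun j => ‖x j - x i‖
          with hm
        have hmpos : 0 < m := by
          rw [hm, Finset.lt_inf'_iff]
          intro j hj
          exact norm_sub_pos_iff.mpr (Finset.mem_filter.mp hj).2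
        refine ⟨m / 4, by positivity, ?_⟩
        intro j hj hxx
        have hjmem : j ∈ (Finset.range N).filter fun j => x j ≠ x i :=
          Finset.mem_filter.mpr ⟨Finset.mem_range.mpr hj, hxx⟩
        have hle : m ≤ ‖x j - x i‖ := Finset.inf'_le _ hjmem
        linarith
      · exact ⟨1, one_pos, fun j hj hxx =>
          absurd ⟨j, Finset.mem_filter.mpr ⟨Finset.mem_range.mpr hj, hxx⟩⟩ hs⟩
    obtain ⟨r₀, hr₀pos, hr₀⟩ := hr0
    refine Filter.limsup_le_of_le (by isBoundedDefault) ?_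
    filter_upwards [Ioo_mem_nhdsGT_of_mem
      (show (0 : ℝ) ∈ Set.Ico (0 : ℝ) r₀ from ⟨le_refl 0, hr₀pos⟩)] with r hr
    obtain ⟨hrpos, hrlt⟩ := hr
    -- lower bound for the small ball
    have hlow : a * ν (Metric.closedBall u r) ≤ μ (Metric.closedBall (φ i u) r) := by
      rw [hμapp _ measurableSet_closedBall, ha, ← ENNReal.tsum_mul_right]
      refine ENNReal.tsum_le_tsum fun j => ?_
      by_cases hxx : x j = x i
      · rw [if_pos hxx]
        refine mul_le_mul_right (measure_mono ?_) _
        intro v hv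
        simp only [Metric.mem_closedBall] at hv
        simp only [mem_preimage, Metric.mem_closedBall]
        have hsame : φ j v = φ i v := by simp only [hφ, hxx]
        rw [hsame, hφdist]
        exact hv
      · simp [hxx]
    -- upper bound for the doubled ball
    have hup : μ (Metric.closedBall (φ i u) (2 * r)) ≤
        (2 * C) * (a * ν (Metric.closedBall u r)) := by
      have hterm : ∀ j, c j * ν (φ j ⁻¹' Metric.closedBall (φ i u) (2 * r)) ≤
          ((if x j = x i then c j else 0) + (if N ≤ j then c j else 0)) *
            ν (Metric.closedBall u (2 * r)) := by
        intro j
        have hple : ν (φ j ⁻¹' Metric.closedBall (φ i u) (2 * r)) ≤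
            ν (Metric.closedBall u (2 * r)) := by
          refine measure_mono ?_
          have h := hpre j (2 * r) (φ i u)
          rwa [hQφ] at h
        by_cases hxx : x j = x i
        · rw [if_pos hxx]
          exact le_trans (mul_le_mul_right hple _) (mul_le_mul_left le_self_add _)
        · rw [if_neg hxx]
          by_cases hNj : N ≤ j
          · rw [if_pos hNj, zero_add]
            exact le_trans (mul_le_mul_right hple _) le_rfl
          · -- the plane is far away, so the preimage is empty
            have hemp : φ j ⁻¹' Metric.closedBall (φ i u) (2 * r) = ∅ := by
              rw [eq_empty_iff_forall_notMem]
              intro v hv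
              simp only [mem_preimage, Metric.mem_closedBall, dist_eq_norm] at hv
              have h2 := hφnormsq j i v u
              have hge : ‖x j - x i‖ ≤ ‖φ j v - φ i u‖ := by
                nlinarith [sq_nonneg ‖v - u‖, norm_nonneg (φ j v - φ i u),
                  norm_nonneg (x j - x i)]
              have hfar := hr₀ j (Nat.lt_of_not_le hNj) hxx
              linarith
            simp [hemp]
      calc μ (Metric.closedBall (φ i u) (2 * r))
          = ∑' j, c j * ν (φ j ⁻¹' Metric.closedBall (φ i u) (2 * r)) :=
            hμapp _ measurableSet_closedBall
        _ ≤ ∑' j, ((if x j = x i then c j else 0) + (if N ≤ j then c j else 0)) *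
              ν (Metric.closedBall u (2 * r)) := ENNReal.tsum_le_tsum hterm
        _ = (a + ∑' j, (if N ≤ j then c j else 0)) * ν (Metric.closedBall u (2 * r)) := by
            rw [ENNReal.tsum_mul_right, ENNReal.tsum_add]
        _ ≤ (a + a) * ν (Metric.closedBall u (2 * r)) :=
            mul_le_mul_left (add_le_add_right (htail.trans hn.le) a) _
        _ = 2 * a * ν (Metric.closedBall u (2 * r)) := by rw [← two_mul]
        _ ≤ 2 * a * (C * ν (Metric.closedBall u r)) :=
            mul_le_mul_right (hνdoub u r hrpos) _
        _ = (2 * C) * (a * ν (Metric.closedBall u r)) := by ring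
    exact ENNReal.div_le_of_le_mul (hup.trans (mul_le_mul_right hlow _))
end
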